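/- arXiv:1112.6103 — 2 statements merged into one kernel-verified Lean document; each statement's English description precedes it below -/
import Mathlib

section
/- (Lemma 1.15) Let F be a field of characteristic 0, L a Lie algebra over F, C an F-vector space, and τ : L × L → C a 2-cocycle; let L̃ = L × C be the corresponding central extension with bracket [(x,e),(y,f)] = ([x,y], τ(x,y)). Let G be a finite-dimensional simple Lie subalgebra of L and let D be a subspace of L such that [x,d] = 0 for all x ∈ G and d ∈ D (D is a trivial G-submodule of L under the adjoint action). Then τ(x,d) = 0 for all x ∈ G and d ∈ D; in particular D × {0} is a trivial G-submodule of L̃. -/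
/-!
A simple Lie algebra is perfect, so `G` is spanned by brackets `⁅a, b⁆` with `a b ∈ G`. For such
a bracket the cocycle identity at `(a, b, d)` loses the two terms `τ ⁅b, d⁆ a` and `τ ⁅d, a⁆ b`,
since `G` centralizes `d`, leaving `τ ⁅a, b⁆ d = 0`.
-/

theorem LieAlgebra.IsSimple.lie_top_top_eq_top {R L : Type*} [CommRing R] [LieRing L]
    [LieAlgebra R L] [IsSimple R L] : ⁅(⊤ : LieIdeal R L), (⊤ : LieIdeal R L)⁆ = ⊤ :=
  lie_eq_self_of_isAtom_of_nonabelian ⊤ (IsSimple.isAtom_top R L) <|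
    (lie_abelian_iff_equiv_lie_abelian LieIdeal.topEquiv).not.mpr (IsSimple.non_abelian R)

theorem LinearMap.eq_zero_of_map_lie_eq_zero {R L M : Type*} [CommRing R] [LieRing L]
    [LieAlgebra R L] [AddCommGroup M] [Module R M]
    (hL : ⁅(⊤ : LieIdeal R L), (⊤ : LieIdeal R L)⁆ = ⊤) (f : L →ₗ[R] M)
    (hf : ∀ x y : L, f ⁅x, y⁆ = 0) : f = 0 := by
  rw [← LinearMap.ker_eq_top, eq_top_iff, ← LieSubmodule.top_toSubmodule (R := R) (L := L),
    ← hL, LieSubmodule.lieIdeal_oper_eq_linear_span', Submodule.span_le]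
  rintro _ ⟨x, -, y, -, rfl⟩
  exact hf x y

theorem cocycle_apply_lie_eq_zero {R L C : Type*} [CommRing R] [LieRing L] [LieAlgebra R L]
    [AddCommGroup C] [Module R C] (τ : L →ₗ[R] L →ₗ[R] C)
    (hτ : ∀ x y z : L, τ ⁅x, y⁆ z + τ ⁅y, z⁆ x + τ ⁅z, x⁆ y = 0)
    {x y z : L} (hx : ⁅x, z⁆ = 0) (hy : ⁅y, z⁆ = 0) : τ ⁅x, y⁆ z = 0 := by
  simpa [hy, ← lie_skew z x, hx] using hτ x y z

theorem stmt_2_general (F L C : Type*) [Field F] [LieRing L] [LieAlgebra F L]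
    [AddCommGroup C] [Module F C]
    (τ : L →ₗ[F] L →ₗ[F] C)
    (hτ_cocycle : ∀ x y z : L, τ ⁅x, y⁆ z + τ ⁅y, z⁆ x + τ ⁅z, x⁆ y = 0)
    (G : LieSubalgebra F L) [LieAlgebra.IsSimple F G]
    (D : Submodule F L)
    (hD : ∀ x ∈ G, ∀ d ∈ D, ⁅x, d⁆ = 0) :
    ∀ x ∈ G, ∀ d ∈ D, τ x d = 0 := by
  intro x hx d hd
  have hτd : τ.flip d ∘ₗ G.toSubmodule.subtype = 0 :=
    LinearMap.eq_zero_of_map_lie_eq_zero (L := G) LieAlgebra.IsSimple.lie_top_top_eq_top _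
      fun a b ↦ cocycle_apply_lie_eq_zero τ hτ_cocycle (hD a a.2 d hd) (hD b b.2 d hd)
  exact LinearMap.congr_fun hτd ⟨x, hx⟩

/-- Lemma 1.15: If `G` is a finite-dimensional simple Lie subalgebra of `L`
and `D` is a subspace of `L` centralized by `G`, then any 2-cocycle `τ` on `L` vanishes on
`G × D`; in particular `D × {0}` is a trivial `G`-submodule of the central extension `L × C`. -/
theorem stmt_2 (F L C : Type*) [Field F] [CharZero F] [LieRing L] [LieAlgebra F L]
    [AddCommGroup C] [Module F C]
    (τ : L →ₗ[F] L →ₗ[F] C)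
    (hτ_alt : ∀ x : L, τ x x = 0)
    (hτ_cocycle : ∀ x y z : L, τ ⁅x, y⁆ z + τ ⁅y, z⁆ x + τ ⁅z, x⁆ y = 0)
    (G : LieSubalgebra F L) [FiniteDimensional F G] [LieAlgebra.IsSimple F G]
    (D : Submodule F L)
    (hD : ∀ x ∈ G, ∀ d ∈ D, ⁅x, d⁆ = 0) :
    ∀ x ∈ G, ∀ d ∈ D, τ x d = 0 :=
  stmt_2_general F L C τ hτ_cocycle G D hD
end

section
/- Let F be a field of characteristic 0, I an infinite set, Ī a disjoint copy of I, J = I ⊎ Ī, and V the F-vector space with basis {v_j : j ∈ J}. Let ω be the bilinear form on V determined by ω(v_i, v_ī) = 2 = −ω(v_ī, v_i) for i ∈ I and ω(v_j, v_k) = 0 for all other pairs of basis vectors. Let sp(I) be the set of all finite-rank F-linear endomorphisms φ of V satisfying ω(φ(v), w) = −ω(v, φ(w)) for all v, w ∈ V (equivalently, the skew-adjoint elements of the span of the operators e_{j,k}, j,k ∈ J, where e_{j,k}(v_i) = δ_{k,i} v_j). Then sp(I) is a Lie subalgebra of End_F(V) and V is an irreducible sp(I)-module: the only subspaces of V invariant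 under all elements of sp(I) are {0} and V. -/
attribute [local instance] LieRing.ofAssociativeRing

/-!
For an antisymmetric form `ω` and any `u w : V`, the rank-two map `x ↦ ω u x • w + ω w x • u` is
skew-adjoint. Let `W` be invariant and `0 ≠ x ∈ W`; by nondegeneracy pick `z` with `ω z x ≠ 0`.
The map for `(z, z)` sends `x` to `2 ω z x • z`, so `z ∈ W`; the map for `(y, z)` sends `x` to
`ω y x • z + ω z x • y`, so `y ∈ W` for every `y`. The given form is antisymmetric and
nondegenerate because `ω v_i = 2 v_ī^*` and `ω v_ī = -2 v_i^*`.
-/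

open LinearMap (BilinForm)

namespace Module.End

variable (K V : Type*) [Field K] [AddCommGroup V] [Module K V]

def finiteRankLieIdeal : LieIdeal K (Module.End K V) where
  carrier := {φ | Module.Finite K (LinearMap.range φ)}
  zero_mem' := by
    show Module.Finite K (LinearMap.range (0 : Module.End K V))
    rw [LinearMap.range_zero]
    infer_instance
  add_mem' {φ ψ} (_ : Module.Finite K _) (_ : Module.Finite K _) :=
    Submodule.finiteDimensional_of_le (LinearMap.range_add_le φ ψ)
  smul_mem' c φ (_ : Module.Finite K _) :=
    Submodule.finiteDimensional_of_le (LinearMap.range_smul_le_range φ c)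
  lie_mem {ψ φ} (_ : Module.Finite K _) := by
    show Module.Finite K (LinearMap.range ⁅ψ, φ⁆)
    refine Submodule.finiteDimensional_of_le
      (S₂ := (LinearMap.range φ).map ψ ⊔ LinearMap.range φ) ?_
    rintro _ ⟨v, rfl⟩
    rw [LieRing.of_associative_ring_bracket]
    exact Submodule.sub_mem _
      (Submodule.mem_sup_left ⟨φ v, LinearMap.mem_range_self φ v, rfl⟩)
      (Submodule.mem_sup_right (LinearMap.mem_range_self φ (ψ v)))

variable {K V} in
theorem mem_finiteRankLieIdeal {φ : Module.End K V} :
    φ ∈ finiteRankLieIdeal K V ↔ Module.Finite K (LinearMap.range φ) :=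
  LieSubmodule.mem_mk_iff' _ _

end Module.End

namespace LinearMap.BilinForm

section Symplectic

variable {K V : Type*} [Field K] [AddCommGroup V] [Module K V] (ω : BilinForm K V)

def finiteRankSkewAdjoint : LieSubalgebra K (Module.End K V) :=
  skewAdjointLieSubalgebra ω ⊓ (Module.End.finiteRankLieIdeal K V).toLieSubalgebra

theorem mem_finiteRankSkewAdjoint {φ : Module.End K V} :
    φ ∈ ω.finiteRankSkewAdjoint ↔
      Module.Finite K (LinearMap.range φ) ∧ ∀ v w, ω (φ v) w = -ω v (φ w) := by
  rw [finiteRankSkewAdjoint, LieSubalgebra.mem_inf, LieIdeal.mem_toLieSubalgebra,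
    Module.End.mem_finiteRankLieIdeal, and_comm]
  exact Iff.rfl

-- The image of `u ⊙ w` under the identification `Sym² V ≅ 𝔰𝔭(V, ω)`.
def sympProd (u w : V) : Module.End K V := (ω u).smulRight w + (ω w).smulRight u

theorem sympProd_apply (u w x : V) : ω.sympProd u w x = ω u x • w + ω w x • u := rfl

theorem sympProd_mem_finiteRankSkewAdjoint (hω : ∀ x y, ω x y = -ω y x) (u w : V) :
    ω.sympProd u w ∈ ω.finiteRankSkewAdjoint := by
  refine (mem_finiteRankSkewAdjoint ω).2 ⟨?_, fun x y => ?_⟩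
  · refine Submodule.finiteDimensional_of_le (S₂ := K ∙ w ⊔ K ∙ u) ?_
    rintro _ ⟨x, rfl⟩
    exact Submodule.add_mem _
      (Submodule.mem_sup_left (Submodule.smul_mem _ _ (Submodule.mem_span_singleton_self w)))
      (Submodule.mem_sup_right (Submodule.smul_mem _ _ (Submodule.mem_span_singleton_self u)))
  · simp only [sympProd_apply, map_add, map_smul, LinearMap.add_apply, LinearMap.smul_apply,
      smul_eq_mul]
    rw [hω x w, hω x u]
    ring

theorem eq_bot_or_eq_top_of_sympProd_mem (h2 : (2 : K) ≠ 0) (hω : ω.SeparatingRight)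
    {W : Submodule K V} (hW : ∀ u w, ∀ x ∈ W, ω.sympProd u w x ∈ W) : W = ⊥ ∨ W = ⊤ := by
  refine or_iff_not_imp_left.2 fun hW0 => W.eq_top_iff'.2 fun y => ?_
  obtain ⟨x, hxW, hx0⟩ := (Submodule.ne_bot_iff W).1 hW0
  obtain ⟨z, hz⟩ : ∃ z, ω z x ≠ 0 := by
    by_contra! h
    exact hx0 (hω x h)
  have hzW : z ∈ W := by
    have h := hW z z x hxW
    rw [sympProd_apply, ← add_smul, ← two_mul] at h
    exact (W.smul_mem_iff (mul_ne_zero h2 hz)).1 h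
  have hy := W.sub_mem (hW y z x hxW) (W.smul_mem (ω y x) hzW)
  rw [sympProd_apply, add_sub_cancel_left] at hy
  exact (W.smul_mem_iff hz).1 hy

theorem eq_bot_or_eq_top_of_finiteRankSkewAdjoint_invariant (h2 : (2 : K) ≠ 0)
    (hω : ∀ x y, ω x y = -ω y x) (hωsep : ω.SeparatingRight) {W : Submodule K V}
    (hW : ∀ φ ∈ ω.finiteRankSkewAdjoint, ∀ v ∈ W, φ v ∈ W) : W = ⊥ ∨ W = ⊤ :=
  ω.eq_bot_or_eq_top_of_sympProd_mem h2 hωsep fun u w =>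
    hW _ (ω.sympProd_mem_finiteRankSkewAdjoint hω u w)

end Symplectic

section StandardForm

variable {F I : Type*} [Field F] [DecidableEq I] {ω : BilinForm F ((I ⊕ I) →₀ F)}

theorem antisymm_of_apply_single
    (hω₁ : ∀ i i' : I, ω (Finsupp.single (Sum.inl i) 1) (Finsupp.single (Sum.inr i') 1)
      = if i = i' then 2 else 0)
    (hω₂ : ∀ i i' : I, ω (Finsupp.single (Sum.inr i) 1) (Finsupp.single (Sum.inl i') 1)
      = if i = i' then -2 else 0)
    (hω₃ : ∀ i i' : I, ω (Finsupp.single (Sum.inl i) 1) (Finsupp.single (Sum.inl i') 1) = 0)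
    (hω₄ : ∀ i i' : I, ω (Finsupp.single (Sum.inr i) 1) (Finsupp.single (Sum.inr i') 1) = 0)
    (x y : (I ⊕ I) →₀ F) : ω x y = -ω y x := by
  suffices ω = -ω.flip from LinearMap.congr_fun₂ this x y
  refine LinearMap.ext_basis Finsupp.basisSingleOne Finsupp.basisSingleOne fun j k => ?_
  rcases j with i | i <;> rcases k with i' | i' <;>
    simp [hω₁, hω₂, hω₃, hω₄, eq_comm] <;> split_ifs <;> simp

theorem apply_single_inl
    (hω₁ : ∀ i i' : I, ω (Finsupp.single (Sum.inl i) 1) (Finsupp.single (Sum.inr i') 1)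
      = if i = i' then 2 else 0)
    (hω₃ : ∀ i i' : I, ω (Finsupp.single (Sum.inl i) 1) (Finsupp.single (Sum.inl i') 1) = 0)
    (i : I) (y : (I ⊕ I) →₀ F) :
    ω (Finsupp.single (Sum.inl i) 1) y = 2 * y (Sum.inr i) := by
  suffices ω (Finsupp.single (Sum.inl i) 1) = (2 : F) • Finsupp.lapply (Sum.inr i) from
    LinearMap.congr_fun this y
  refine Finsupp.basisSingleOne.ext fun k => ?_
  rcases k with i' | i' <;> simp [hω₁, hω₃, Finsupp.single_apply, eq_comm]

theorem apply_single_inr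
    (hω₂ : ∀ i i' : I, ω (Finsupp.single (Sum.inr i) 1) (Finsupp.single (Sum.inl i') 1)
      = if i = i' then -2 else 0)
    (hω₄ : ∀ i i' : I, ω (Finsupp.single (Sum.inr i) 1) (Finsupp.single (Sum.inr i') 1) = 0)
    (i : I) (y : (I ⊕ I) →₀ F) :
    ω (Finsupp.single (Sum.inr i) 1) y = -2 * y (Sum.inl i) := by
  suffices ω (Finsupp.single (Sum.inr i) 1) = (-2 : F) • Finsupp.lapply (Sum.inl i) from
    LinearMap.congr_fun this y
  refine Finsupp.basisSingleOne.ext fun k => ?_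
  rcases k with i' | i' <;> simp [hω₂, hω₄, Finsupp.single_apply, eq_comm]

theorem separatingRight_of_apply_single (h2 : (2 : F) ≠ 0)
    (hω₁ : ∀ i i' : I, ω (Finsupp.single (Sum.inl i) 1) (Finsupp.single (Sum.inr i') 1)
      = if i = i' then 2 else 0)
    (hω₂ : ∀ i i' : I, ω (Finsupp.single (Sum.inr i) 1) (Finsupp.single (Sum.inl i') 1)
      = if i = i' then -2 else 0)
    (hω₃ : ∀ i i' : I, ω (Finsupp.single (Sum.inl i) 1) (Finsupp.single (Sum.inl i') 1) = 0)
    (hω₄ : ∀ i i' : I, ω (Finsupp.single (Sum.inr i) 1) (Finsupp.single (Sum.inr i') 1) = 0) :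
    ω.SeparatingRight := by
  intro y hy
  ext (i | i)
  · simpa [apply_single_inr hω₂ hω₄, h2] using hy (Finsupp.single (Sum.inr i) 1)
  · simpa [apply_single_inl hω₁ hω₃, h2] using hy (Finsupp.single (Sum.inl i) 1)

end StandardForm

end LinearMap.BilinForm

theorem stmt_12_general (F I : Type*) [Field F] [CharZero F] [DecidableEq I]
    (ω : ((I ⊕ I) →₀ F) →ₗ[F] ((I ⊕ I) →₀ F) →ₗ[F] F)
    (hω₁ : ∀ i i' : I, ω (Finsupp.single (Sum.inl i) 1) (Finsupp.single (Sum.inr i') 1)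
      = if i = i' then 2 else 0)
    (hω₂ : ∀ i i' : I, ω (Finsupp.single (Sum.inr i) 1) (Finsupp.single (Sum.inl i') 1)
      = if i = i' then -2 else 0)
    (hω₃ : ∀ i i' : I, ω (Finsupp.single (Sum.inl i) 1) (Finsupp.single (Sum.inl i') 1) = 0)
    (hω₄ : ∀ i i' : I, ω (Finsupp.single (Sum.inr i) 1) (Finsupp.single (Sum.inr i') 1) = 0)
    (sp : Set (Module.End F ((I ⊕ I) →₀ F)))
    (hsp : sp = {φ : Module.End F ((I ⊕ I) →₀ F) |
      Module.Finite F (LinearMap.range φ) ∧ ∀ v w, ω (φ v) w = - ω v (φ w)}) :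
    (∃ S : LieSubalgebra F (Module.End F ((I ⊕ I) →₀ F)), (S : Set (Module.End F ((I ⊕ I) →₀ F))) = sp) ∧
    (∀ W : Submodule F ((I ⊕ I) →₀ F),
      (∀ φ ∈ sp, ∀ v ∈ W, φ v ∈ W) → W = ⊥ ∨ W = ⊤) := by
  have hsp' : sp = LinearMap.BilinForm.finiteRankSkewAdjoint ω := by
    rw [hsp]
    ext φ
    exact (LinearMap.BilinForm.mem_finiteRankSkewAdjoint ω).symm
  subst hsp'
  refine ⟨⟨_, rfl⟩, fun W hW => ?_⟩
  exact LinearMap.BilinForm.eq_bot_or_eq_top_of_finiteRankSkewAdjoint_invariant ω two_ne_zero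
    (LinearMap.BilinForm.antisymm_of_apply_single hω₁ hω₂ hω₃ hω₄)
    (LinearMap.BilinForm.separatingRight_of_apply_single two_ne_zero hω₁ hω₂ hω₃ hω₄) hW

/-- Let `V` be the vector space with basis indexed by `J = I ⊎ Ī` (realized as
`(I ⊕ I) →₀ F`) and `ω` the symplectic-type bilinear form determined on the basis as indicated.
Then the set `sp(I)` of finite-rank endomorphisms `φ` of `V` with `ω (φ v) w = - ω v (φ w)` is
a Lie subalgebra of `End F V`, and `V` is an irreducible `sp(I)`-module: the only subspaces of
`V` invariant under all elements of `sp(I)` are `⊥` and `⊤`. -/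
theorem stmt_12 (F I : Type*) [Field F] [CharZero F] [Infinite I] [DecidableEq I]
    (ω : ((I ⊕ I) →₀ F) →ₗ[F] ((I ⊕ I) →₀ F) →ₗ[F] F)
    (hω₁ : ∀ i i' : I, ω (Finsupp.single (Sum.inl i) 1) (Finsupp.single (Sum.inr i') 1)
      = if i = i' then 2 else 0)
    (hω₂ : ∀ i i' : I, ω (Finsupp.single (Sum.inr i) 1) (Finsupp.single (Sum.inl i') 1)
      = if i = i' then -2 else 0)
    (hω₃ : ∀ i i' : I, ω (Finsupp.single (Sum.inl i) 1) (Finsupp.single (Sum.inl i') 1) = 0)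
    (hω₄ : ∀ i i' : I, ω (Finsupp.single (Sum.inr i) 1) (Finsupp.single (Sum.inr i') 1) = 0)
    (sp : Set (Module.End F ((I ⊕ I) →₀ F)))
    (hsp : sp = {φ : Module.End F ((I ⊕ I) →₀ F) |
      Module.Finite F (LinearMap.range φ) ∧ ∀ v w, ω (φ v) w = - ω v (φ w)}) :
    (∃ S : LieSubalgebra F (Module.End F ((I ⊕ I) →₀ F)), (S : Set (Module.End F ((I ⊕ I) →₀ F))) = sp) ∧
    (∀ W : Submodule F ((I ⊕ I) →₀ F),
      (∀ φ ∈ sp, ∀ v ∈ W, φ v ∈ W) → W = ⊥ ∨ W = ⊤) :=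
  stmt_12_general F I ω hω₁ hω₂ hω₃ hω₄ sp hsp
end
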